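/- arXiv:2401.08620 — 2 statements merged into one kernel-verified Lean document; each statement's English description precedes it below -/
import Mathlib

section
/- Let f:[a,b]→ℝ be continuous and Φ-Hölder. Then for every even n ∈ ℕ, n ≥ 2, max{f(a), f(b)} − (n/2)·Φ((b−a)/n) ≤ S_n(f)/(b−a) ≤ min{f(a), f(b)} + (n/2)·Φ((b−a)/n), where S_n(f) is the composite Simpson sum with n equal subintervals. -/
/-!
With `x_j = a + j (b - a) / n` and `h = (b - a) / n`, the quotient `S_n(f) / (b - a)` is a weighted
mean of `f(x_0), …, f(x_n)` with weights `1, 4, 2, 4, …, 2, 4, 1` of total `3n`. Telescoping the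
Hölder bound along the grid gives `|f(x_j) - f(a)| ≤ j Φ(h)` and `|f(x_j) - f(b)| ≤ (n - j) Φ(h)`,
and both `∑ w_j j` and `∑ w_j (n - j)` equal `3n²/2`, so the mean lies within `(n/2) Φ(h)` of both
`f(a)` and `f(b)`.
-/

open Finset

theorem grid_mem_Icc {a b : ℝ} (hab : a ≤ b) {n j : ℕ} (hjn : j ≤ n) :
    a + j * (b - a) / n ∈ Set.Icc a b := by
  rcases Nat.eq_zero_or_pos n with rfl | hn
  · simp [hab]
  have hj : (j : ℝ) ≤ n := by exact_mod_cast hjn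
  have hba : 0 ≤ b - a := sub_nonneg.2 hab
  have hstep_nonneg : 0 ≤ j * (b - a) / n := by positivity
  have hstep_le : j * (b - a) / n ≤ b - a := by
    rw [div_le_iff₀ (by exact_mod_cast hn)]
    nlinarith
  exact ⟨by linarith, by linarith⟩

theorem abs_sub_grid_le {a b : ℝ} (hab : a ≤ b) {f Φ : ℝ → ℝ}
    (hhold : ∀ x ∈ Set.Icc a b, ∀ y ∈ Set.Icc a b, |f x - f y| ≤ Φ |x - y|)
    {n i j : ℕ} (hij : i ≤ j) (hjn : j ≤ n) :
    |f (a + j * (b - a) / n) - f (a + i * (b - a) / n)| ≤ ((j : ℝ) - i) * Φ ((b - a) / n) := by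
  have hstep : ∀ {k}, i ≤ k → k < j →
      dist (f (a + k * (b - a) / n)) (f (a + (k + 1 : ℕ) * (b - a) / n)) ≤ Φ ((b - a) / n) := by
    intro k _ hk
    have hdist : |a + k * (b - a) / n - (a + (k + 1 : ℕ) * (b - a) / n)| = (b - a) / n := by
      rw [abs_sub_comm, Nat.cast_succ, add_mul, add_div, one_mul, add_sub_add_left_eq_sub,
        add_sub_cancel_left, abs_of_nonneg (div_nonneg (sub_nonneg.2 hab) n.cast_nonneg)]
    rw [Real.dist_eq, ← hdist]
    exact hhold _ (grid_mem_Icc hab (by omega)) _ (grid_mem_Icc hab (by omega))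
  have := dist_le_Ico_sum_of_dist_le hij hstep
  rwa [sum_const, Nat.card_Ico, nsmul_eq_mul, Nat.cast_sub hij, dist_comm, Real.dist_eq] at this

/-- The composite Simpson sum on `2 m` subintervals, up to the factor `h / 3`, with `g j` standing
for `f(x_j)`. -/
def simpsonSum (g : ℕ → ℝ) (m : ℕ) : ℝ :=
  g 0 + 2 * ∑ i ∈ Ico 1 m, g (2 * i) + 4 * ∑ i ∈ Icc 1 m, g (2 * i - 1) + g (2 * m)

namespace simpsonSum

variable {g g' : ℕ → ℝ} {m : ℕ}

theorem sub : simpsonSum (fun j => g j - g' j) m = simpsonSum g m - simpsonSum g' m := by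
  simp only [simpsonSum, sum_sub_distrib]
  ring

theorem mul_const (c : ℝ) : simpsonSum (fun j => g j * c) m = simpsonSum g m * c := by
  simp only [simpsonSum, ← sum_mul]
  ring

theorem const (hm : 1 ≤ m) (c : ℝ) : simpsonSum (fun _ => c) m = 6 * m * c := by
  simp only [simpsonSum, sum_const, Nat.card_Ico, Nat.card_Icc, nsmul_eq_mul,
    Nat.cast_sub hm, add_tsub_cancel_right]
  ring

theorem natCast : simpsonSum (fun j => (j : ℝ)) m = 6 * m ^ 2 := by
  induction m with
  | zero => simp [simpsonSum]
  | succ m ih =>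
    rcases Nat.eq_zero_or_pos m with rfl | hm
    · norm_num [simpsonSum]
    simp only [simpsonSum] at ih ⊢
    rw [sum_Ico_succ_top hm, sum_Icc_succ_top (by omega),
      show 2 * (m + 1) - 1 = 2 * m + 1 by omega]
    push_cast at ih ⊢
    linear_combination ih

theorem reflect_natCast (hm : 1 ≤ m) :
    simpsonSum (fun j => (2 * m - j : ℝ)) m = 6 * m ^ 2 := by
  rw [sub, const hm, natCast]
  ring

theorem mono (h : ∀ j ≤ 2 * m, g j ≤ g' j) : simpsonSum g m ≤ simpsonSum g' m := by
  unfold simpsonSum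
  gcongr with i hi i hi
  · exact h 0 (Nat.zero_le _)
  · exact h _ (by simp at hi; omega)
  · exact h _ (by simp at hi; omega)
  · exact h _ le_rfl

theorem abs_sub_le (hm : 1 ≤ m) {c : ℝ} {d : ℕ → ℝ} (h : ∀ j ≤ 2 * m, |g j - c| ≤ d j) :
    |simpsonSum g m - 6 * m * c| ≤ simpsonSum d m := by
  rw [abs_sub_le_iff, ← const hm c, ← sub, ← sub]
  exact ⟨mono fun j hj => (abs_sub_le_iff.1 (h j hj)).1,
    mono fun j hj => (abs_sub_le_iff.1 (h j hj)).2⟩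

theorem abs_div_sub_le (hm : 1 ≤ m) {c δ : ℝ} {d : ℕ → ℝ} (hd : simpsonSum d m = 6 * m ^ 2)
    (h : ∀ j ≤ 2 * m, |g j - c| ≤ d j * δ) :
    |simpsonSum g m / (6 * m) - c| ≤ m * δ := by
  have hm0 : (0 : ℝ) < 6 * m := by positivity
  have hsum := abs_sub_le hm h
  rw [mul_const, hd] at hsum
  rw [show simpsonSum g m / (6 * m) - c = (simpsonSum g m - 6 * m * c) / (6 * m) by field_simp,
    abs_div, abs_of_pos hm0, div_le_iff₀ hm0]
  linarith

theorem max_sub_le_div_le_min_add (hm : 1 ≤ m) {δ : ℝ}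
    (hleft : ∀ j ≤ 2 * m, |g j - g 0| ≤ j * δ)
    (hright : ∀ j ≤ 2 * m, |g j - g (2 * m)| ≤ (2 * m - j) * δ) :
    max (g 0) (g (2 * m)) - m * δ ≤ simpsonSum g m / (6 * m) ∧
      simpsonSum g m / (6 * m) ≤ min (g 0) (g (2 * m)) + m * δ := by
  obtain ⟨hl₁, hl₂⟩ := abs_le.1 (abs_div_sub_le hm natCast hleft)
  obtain ⟨hr₁, hr₂⟩ := abs_le.1 (abs_div_sub_le hm (reflect_natCast hm) hright)
  constructor
  · rw [sub_le_iff_le_add]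
    exact max_le (by linarith) (by linarith)
  · rw [← sub_le_iff_le_add]
    exact le_min (by linarith) (by linarith)

end simpsonSum

theorem simpson_phi_holder_general
    (a b : ℝ) (hab : a < b) (f Φ : ℝ → ℝ)
    (hhold : ∀ x ∈ Set.Icc a b, ∀ y ∈ Set.Icc a b, |f x - f y| ≤ Φ |x - y|)
    (n : ℕ) (hn : 2 ≤ n) (hne : Even n) :
    max (f a) (f b) - (n / 2 : ℝ) * Φ ((b - a) / n) ≤ ((b - a) / (3 * n) * (f a + 2 * ∑ i ∈ Finset.Ico 1 (n / 2), f (a + (2 * i : ℕ) * (b - a) / n) + 4 * ∑ i ∈ Finset.Icc 1 (n / 2), f (a + (2 * i - 1 : ℕ) * (b - a) / n) + f b)) / (b - a) ∧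
    ((b - a) / (3 * n) * (f a + 2 * ∑ i ∈ Finset.Ico 1 (n / 2), f (a + (2 * i : ℕ) * (b - a) / n) + 4 * ∑ i ∈ Finset.Icc 1 (n / 2), f (a + (2 * i - 1 : ℕ) * (b - a) / n) + f b)) / (b - a) ≤ min (f a) (f b) + (n / 2 : ℝ) * Φ ((b - a) / n) := by
  obtain ⟨m, rfl⟩ := hne.two_dvd
  have hm : 1 ≤ m := by omega
  have hn0 : ((2 * m : ℕ) : ℝ) ≠ 0 := by exact_mod_cast (show 2 * m ≠ 0 by omega)
  have key := simpsonSum.max_sub_le_div_le_min_add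
    (g := fun j => f (a + j * (b - a) / (2 * m : ℕ))) (δ := Φ ((b - a) / (2 * m : ℕ))) hm
    (fun j hj => by simpa using abs_sub_grid_le hab.le hhold (Nat.zero_le j) hj)
    (fun j hj => by
      rw [abs_sub_comm]
      simpa using abs_sub_grid_le hab.le hhold hj le_rfl)
  simp only [simpsonSum, Nat.cast_zero, zero_mul, zero_div, add_zero,
    mul_div_cancel_left₀ _ hn0, add_sub_cancel] at key
  have hmean : ∀ S : ℝ, (b - a) / (3 * ((2 * m : ℕ) : ℝ)) * S / (b - a) = S / (6 * m) := by
    intro S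
    have : b - a ≠ 0 := (sub_pos.2 hab).ne'
    push_cast
    field_simp
    ring
  have hhalf : ((2 * m : ℕ) : ℝ) / 2 = m := by push_cast; ring
  rwa [hmean, hhalf, Nat.mul_div_cancel_left m two_pos]

theorem simpson_phi_holder
    (a b : ℝ) (hab : a < b) (f Φ : ℝ → ℝ)
    (hΦ : ∀ t ∈ Set.Icc (0 : ℝ) (b - a), 0 ≤ Φ t)
    (hf : ContinuousOn f (Set.Icc a b))
    (hhold : ∀ x ∈ Set.Icc a b, ∀ y ∈ Set.Icc a b, |f x - f y| ≤ Φ |x - y|)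
    (n : ℕ) (hn : 2 ≤ n) (hne : Even n) :
    max (f a) (f b) - (n / 2 : ℝ) * Φ ((b - a) / n) ≤ ((b - a) / (3 * n) * (f a + 2 * ∑ i ∈ Finset.Ico 1 (n / 2), f (a + (2 * i : ℕ) * (b - a) / n) + 4 * ∑ i ∈ Finset.Icc 1 (n / 2), f (a + (2 * i - 1 : ℕ) * (b - a) / n) + f b)) / (b - a) ∧
    ((b - a) / (3 * n) * (f a + 2 * ∑ i ∈ Finset.Ico 1 (n / 2), f (a + (2 * i : ℕ) * (b - a) / n) + 4 * ∑ i ∈ Finset.Icc 1 (n / 2), f (a + (2 * i - 1 : ℕ) * (b - a) / n) + f b)) / (b - a) ≤ min (f a) (f b) + (n / 2 : ℝ) * Φ ((b - a) / n) :=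
  simpson_phi_holder_general a b hab f Φ hhold n hn hne
end

section
/- Let f:[a,b]→ℝ be continuous and Φ-convex. Then for every odd n ∈ ℕ, n ≥ 1, f((a+b)/2) − ((n²−1)/12)·Φ((b−a)/n) − Φ((b−a)/(2n)) ≤ T_n(f)/(b−a), where T_n(f) is the composite trapezoidal sum with n equal subintervals. -/
/-!
Put `h = (b - a) / n` and `g i = f (a + i h)`. Φ-convexity at `t = 1/2` gives
`g (i+1) ≤ (g i + g (i+2)) / 2 + Φ h`, so `v i = g i + Φ h * i²` is a convex sequence. For a convex
sequence on `{0, …, 2p+1}` each symmetric pair `v i + v (2p+1-i)` dominates the central pair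
`v p + v (p+1)`, and the trapezoidal sum is a sum of such pairs; removing the quadratic again costs
`(n² - 1)/12 · Φ h`. Finally `(a + b)/2` is the midpoint of the two central nodes, which costs
`Φ (h/2)`.
-/

open Finset

def PhiConvexOn (s : Set ℝ) (Φ f : ℝ → ℝ) : Prop :=
  ∀ x ∈ s, ∀ y ∈ s, ∀ t ∈ Set.Icc (0:ℝ) 1, f (t * x + (1 - t) * y) ≤
    t * f x + (1 - t) * f y + t * Φ ((1 - t) * |y - x|) + (1 - t) * Φ (t * |y - x|)

lemma PhiConvexOn.midpoint_le {s : Set ℝ} {Φ f : ℝ → ℝ} (hf : PhiConvexOn s Φ f)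
    {x y : ℝ} (hx : x ∈ s) (hy : y ∈ s) :
    f ((x + y) / 2) ≤ (f x + f y) / 2 + Φ (|y - x| / 2) := by
  have h := hf x hx y hy (1 / 2) ⟨by norm_num, by norm_num⟩
  rw [show (1 : ℝ) - 1 / 2 = 1 / 2 by norm_num, show 1 / 2 * |y - x| = |y - x| / 2 by ring,
    show 1 / 2 * x + 1 / 2 * y = (x + y) / 2 by ring] at h
  linarith

section ConvexSequence

variable {v : ℕ → ℝ} {N : ℕ}

lemma sub_le_sub_of_convex_seq (hv : ∀ i, i + 2 ≤ N → v (i + 1) - v i ≤ v (i + 2) - v (i + 1))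
    {i j : ℕ} (hij : i ≤ j) (hj : j + 1 ≤ N) : v (i + 1) - v i ≤ v (j + 1) - v j := by
  induction j, hij using Nat.le_induction with
  | base => exact le_rfl
  | succ j _ ih => exact (ih (by omega)).trans (hv j (by omega))

lemma add_le_add_of_convex_seq (hv : ∀ i, i + 2 ≤ N → v (i + 1) - v i ≤ v (i + 2) - v (i + 1))
    {i j k : ℕ} (hij : i ≤ j) (hk : j + k ≤ N) : v (i + k) + v j ≤ v i + v (j + k) := by
  induction k with
  | zero => simp
  | succ k ih =>
    have := sub_le_sub_of_convex_seq hv (i := i + k) (j := j + k) (by omega) (by omega)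
    rw [← add_assoc, ← add_assoc]
    linarith [ih (by omega)]

lemma central_add_le_of_convex_seq {p : ℕ}
    (hv : ∀ i, i + 2 ≤ 2 * p + 1 → v (i + 1) - v i ≤ v (i + 2) - v (i + 1))
    {i : ℕ} (hi : i ≤ 2 * p + 1) : v p + v (p + 1) ≤ v i + v (2 * p + 1 - i) := by
  have low : ∀ i ≤ p, v p + v (p + 1) ≤ v i + v (2 * p + 1 - i) := fun i hi => by
    have := add_le_add_of_convex_seq hv (i := i) (j := p + 1) (k := p - i) (by omega) (by omega)
    rwa [Nat.add_sub_cancel' hi, show p + 1 + (p - i) = 2 * p + 1 - i by omega] at this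
  rcases le_or_gt i p with h | h
  · exact low i h
  · have := low (2 * p + 1 - i) (by omega)
    rw [Nat.sub_sub_self hi] at this
    linarith

lemma mul_central_add_le_sum_of_convex_seq {p : ℕ}
    (hv : ∀ i, i + 2 ≤ 2 * p + 1 → v (i + 1) - v i ≤ v (i + 2) - v (i + 1)) :
    (2 * p + 1 : ℕ) * (v p + v (p + 1)) ≤ ∑ i ∈ range (2 * p + 1), (v i + v (i + 1)) := by
  have reflect : ∑ i ∈ range (2 * p + 1), v (i + 1) = ∑ i ∈ range (2 * p + 1), v (2 * p + 1 - i) := by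
    rw [← sum_range_reflect]
    refine sum_congr rfl fun i hi => ?_
    rw [mem_range] at hi
    congr 1
    omega
  calc ((2 * p + 1 : ℕ) : ℝ) * (v p + v (p + 1))
      = ∑ _i ∈ range (2 * p + 1), (v p + v (p + 1)) := by simp [mul_add]
    _ ≤ ∑ i ∈ range (2 * p + 1), (v i + v (2 * p + 1 - i)) :=
      sum_le_sum fun i hi => central_add_le_of_convex_seq hv (by rw [mem_range] at hi; omega)
    _ = ∑ i ∈ range (2 * p + 1), (v i + v (i + 1)) := by rw [sum_add_distrib, sum_add_distrib, reflect]

end ConvexSequence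

lemma sum_range_sq_add_succ_sq (m : ℕ) :
    ∑ i ∈ range m, ((i : ℝ) ^ 2 + ((i : ℝ) + 1) ^ 2) = (m : ℝ) * (2 * (m : ℝ) ^ 2 + 1) / 3 := by
  induction m with
  | zero => simp
  | succ m ih => rw [sum_range_succ, ih]; push_cast; ring

lemma sum_range_add_succ_eq {g : ℕ → ℝ} {n : ℕ} (hn : 1 ≤ n) :
    ∑ i ∈ range n, (g i + g (i + 1)) = g 0 + 2 * ∑ i ∈ Ico 1 n, g i + g n := by
  obtain ⟨m, rfl⟩ := Nat.exists_eq_add_of_le' hn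
  rw [sum_add_distrib, sum_range_succ', sum_range_succ, sum_Ico_eq_sum_range]
  simp only [add_tsub_cancel_right, add_comm 1]
  ring

lemma central_avg_sub_le_trapezoid_of_midpoint_le {g : ℕ → ℝ} {K : ℝ} {n p : ℕ}
    (hn : n = 2 * p + 1) (hg : ∀ i, i + 2 ≤ n → g (i + 1) ≤ (g i + g (i + 2)) / 2 + K) :
    (g p + g (p + 1)) / 2 - ((n : ℝ) ^ 2 - 1) / 12 * K ≤
      (g 0 + 2 * ∑ i ∈ Ico 1 n, g i + g n) / (2 * n) := by
  subst hn
  set v : ℕ → ℝ := fun i => g i + K * (i : ℝ) ^ 2 with hv_def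
  have hv : ∀ i, i + 2 ≤ 2 * p + 1 → v (i + 1) - v i ≤ v (i + 2) - v (i + 1) := fun i hi => by
    simp only [hv_def]
    push_cast
    linarith [hg i hi]
  have hsum : ∑ i ∈ range (2 * p + 1), (v i + v (i + 1)) =
      ∑ i ∈ range (2 * p + 1), (g i + g (i + 1)) +
        K * ∑ i ∈ range (2 * p + 1), ((i : ℝ) ^ 2 + ((i : ℝ) + 1) ^ 2) := by
    simp only [hv_def, mul_sum, ← sum_add_distrib]
    push_cast
    exact sum_congr rfl fun i _ => by ring
  have hcentral := mul_central_add_le_sum_of_convex_seq hv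
  rw [hsum, sum_range_sq_add_succ_sq, sum_range_add_succ_eq (by omega)] at hcentral
  simp only [hv_def] at hcentral
  rw [le_div_iff₀ (by positivity)]
  push_cast at hcentral ⊢
  linarith

lemma add_mul_div_mem_Icc {a b : ℝ} (hab : a ≤ b) {i n : ℕ} (hi : i ≤ n) :
    a + i * (b - a) / n ∈ Set.Icc a b := by
  have h0 : 0 ≤ (i : ℝ) / n := by positivity
  have h1 : (i : ℝ) / n ≤ 1 := div_le_one_of_le₀ (by exact_mod_cast hi) (Nat.cast_nonneg n)
  rw [mul_div_right_comm, Set.mem_Icc]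
  constructor <;> nlinarith

theorem trapezoid_phi_convex_lower_odd_general
    (a b : ℝ) (hab : a < b) (f Φ : ℝ → ℝ)
    (hconv : ∀ x ∈ Set.Icc a b, ∀ y ∈ Set.Icc a b, ∀ t ∈ Set.Icc (0:ℝ) 1, f (t * x + (1 - t) * y) ≤ t * f x + (1 - t) * f y + t * Φ ((1 - t) * |y - x|) + (1 - t) * Φ (t * |y - x|))
    (n : ℕ) (hno : Odd n) :
    f ((a + b) / 2) - (((n : ℝ) ^ 2 - 1) / 12) * Φ ((b - a) / n) - Φ ((b - a) / (2 * n)) ≤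
      ((b - a) / (2 * n) * (f a + 2 * ∑ i ∈ Finset.Ico 1 n, f (a + i * (b - a) / n) + f b)) / (b - a) := by
  obtain ⟨p, hp⟩ := hno
  have hn : (n : ℝ) = 2 * p + 1 := by exact_mod_cast hp
  have hn0 : (0 : ℝ) < n := by rw [hn]; positivity
  have hba : 0 < b - a := sub_pos.mpr hab
  have hh : 0 < (b - a) / n := div_pos hba hn0
  set x : ℕ → ℝ := fun i => a + i * (b - a) / n with hx_def
  have hx_sub : ∀ i k, x (i + k) - x i = k * ((b - a) / n) := fun i k => by
    simp only [hx_def]; push_cast; ring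
  have hx : ∀ i ≤ n, x i ∈ Set.Icc a b := fun i hi => add_mul_div_mem_Icc hab.le hi
  have hstep : ∀ i, i + 2 ≤ n → f (x (i + 1)) ≤ (f (x i) + f (x (i + 2))) / 2 + Φ ((b - a) / n) :=
    fun i hi => by
      have := PhiConvexOn.midpoint_le hconv (hx i (by omega)) (hx (i + 2) (by omega))
      rwa [show (x i + x (i + 2)) / 2 = x (i + 1) by simp only [hx_def]; push_cast; ring,
        hx_sub, abs_of_pos (by positivity), Nat.cast_ofNat, mul_div_cancel_left₀ _ two_ne_zero]
        at this
  have hmid : f ((a + b) / 2) ≤ (f (x p) + f (x (p + 1))) / 2 + Φ ((b - a) / (2 * n)) := by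
    have := PhiConvexOn.midpoint_le hconv (hx p (by omega)) (hx (p + 1) (by omega))
    rwa [show (x p + x (p + 1)) / 2 = (a + b) / 2 by
        simp only [hx_def]; push_cast; field_simp; rw [hn]; ring,
      hx_sub, Nat.cast_one, one_mul, abs_of_pos hh, div_div, mul_comm _ (2 : ℝ)] at this
  have htrap := central_avg_sub_le_trapezoid_of_midpoint_le (g := fun i => f (x i)) hp hstep
  have hx0 : x 0 = a := by simp [hx_def]
  have hxn : x n = b := by simp only [hx_def]; field_simp; ring
  simp only [hx0, hxn] at htrap
  rw [show (b - a) / (2 * n) * (f a + 2 * ∑ i ∈ Ico 1 n, f (x i) + f b) / (b - a) =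
    (f a + 2 * ∑ i ∈ Ico 1 n, f (x i) + f b) / (2 * n) by field_simp [hba.ne']]
  linarith

theorem trapezoid_phi_convex_lower_odd
    (a b : ℝ) (hab : a < b) (f Φ : ℝ → ℝ)
    (hΦ : ∀ t ∈ Set.Icc (0 : ℝ) (b - a), 0 ≤ Φ t)
    (hf : ContinuousOn f (Set.Icc a b))
    (hconv : ∀ x ∈ Set.Icc a b, ∀ y ∈ Set.Icc a b, ∀ t ∈ Set.Icc (0:ℝ) 1, f (t * x + (1 - t) * y) ≤ t * f x + (1 - t) * f y + t * Φ ((1 - t) * |y - x|) + (1 - t) * Φ (t * |y - x|))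
    (n : ℕ) (hn : 1 ≤ n) (hno : Odd n) :
    f ((a + b) / 2) - (((n : ℝ) ^ 2 - 1) / 12) * Φ ((b - a) / n) - Φ ((b - a) / (2 * n)) ≤
      ((b - a) / (2 * n) * (f a + 2 * ∑ i ∈ Finset.Ico 1 n, f (a + i * (b - a) / n) + f b)) / (b - a) :=
  trapezoid_phi_convex_lower_odd_general a b hab f Φ hconv n hno
end
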